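/- For every natural number n ≥ 1, there exists a coarse embedding of the space 𝒢ℋ^{≤n} of isometry classes of nonempty metric spaces with at most n points, endowed with the Gromov–Hausdorff distance, into the Hilbert space ℓ² of square-summable real sequences. -/

import Mathlib

open Filter

/-- A coarse embedding between (pseudo)metric spaces: there are control functions
`ρ₋, ρ₊` with `ρ₋(t) → ∞` and `ρ₋(d(x,y)) ≤ d(ψ x, ψ y) ≤ ρ₊(d(x,y))` for all `x, y`. -/
def CoarseEmbedding {X Y : Type*} [PseudoMetricSpace X] [PseudoMetricSpace Y]
    (ψ : X → Y) : Prop :=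
  ∃ ρminus ρplus : ℝ → ℝ, Tendsto ρminus atTop atTop ∧
    ∀ x y : X, ρminus (dist x y) ≤ dist (ψ x) (ψ y) ∧ dist (ψ x) (ψ y) ≤ ρplus (dist x y)

/-!
Up to bounded distortion, a metric space `X` with at most `n` points is recorded by the finite set
`K X ⊆ ℝ^{n² + 1}` of distance matrices of its `n`-tuples, each augmented by the tuple's covering
radius: in the sup metric, `2/5 · d_GH(X, Y) ≤ d_H(K X, K Y) ≤ 2 · d_GH(X, Y)`. Finite sets
`A ⊆ ℝ^ι` are then sent to `ℓ²` by multiscale features: at scale `2^j` the lattice point `2^j z`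
carries `max 0 (1 - d(2^j z, A) / 2^j)`. At each scale only `O(|A| + |B|)` features differ, each by
at most `d_H(A, B) / 2^j`, so `‖φ A - φ B‖² ≲ d_H(A, B)`; at each of the `≈ log₂ d_H(A, B)` scales
below `d_H(A, B)` some feature differs by `1/2`, so `‖φ A - φ B‖² ≳ log d_H(A, B)`.
-/

open Metric Set

lemma exists_surjective_of_natCard_le {α β : Type*} [Finite α] [Finite β] [Nonempty α]
    (h : Nat.card α ≤ Nat.card β) : ∃ f : β → α, f.Surjective := by
  have := Fintype.ofFinite α
  have := Fintype.ofFinite β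
  rw [Nat.card_eq_fintype_card, Nat.card_eq_fintype_card] at h
  obtain ⟨e⟩ := Function.Embedding.nonempty_of_card_le h
  exact ⟨Function.invFun e, Function.invFun_surjective e.injective⟩

lemma exists_dist_le_hausdorffDist {α : Type*} [PseudoMetricSpace α] {s t : Set α} {x : α}
    (hx : x ∈ s) (ht : IsCompact t) (hne : t.Nonempty) (hfin : hausdorffEDist s t ≠ ⊤) :
    ∃ y ∈ t, dist x y ≤ hausdorffDist s t := by
  obtain ⟨y, hy, hxy⟩ := ht.exists_infDist_eq_dist hne x
  exact ⟨y, hy, hxy ▸ infDist_le_hausdorffDist_of_mem hx hfin⟩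

lemma hausdorffEDist_coe_finset_ne_top {α : Type*} [PseudoMetricSpace α] {A B : Finset α}
    (hA : A.Nonempty) (hB : B.Nonempty) : hausdorffEDist (A : Set α) B ≠ ⊤ :=
  hausdorffEDist_ne_top_of_nonempty_of_bounded hA.to_set hB.to_set A.finite_toSet.isBounded
    B.finite_toSet.isBounded

section DistMatrix

variable {κ X : Type*} [PseudoMetricSpace X]

noncomputable def coveringRadius (u : κ → X) : ℝ :=
  hausdorffDist (univ : Set X) (range u)

-- The covering-radius entry is what forces a tuple close to a surjective one to be almost onto.
noncomputable def distMatrix (u : κ → X) : (κ × κ) ⊕ Unit → ℝ :=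
  Sum.elim (fun ij => dist (u ij.1) (u ij.2)) fun _ => coveringRadius u

variable (κ X) in
def distMatrices : Set ((κ × κ) ⊕ Unit → ℝ) :=
  range (distMatrix : (κ → X) → _)

lemma coveringRadius_nonneg (u : κ → X) : 0 ≤ coveringRadius u :=
  hausdorffDist_nonneg

lemma coveringRadius_le {u : κ → X} {r : ℝ} (hr : 0 ≤ r) (h : ∀ x, ∃ i, dist x (u i) ≤ r) :
    coveringRadius u ≤ r := by
  refine hausdorffDist_le_of_mem_dist hr (fun x _ => ?_) fun y _ => ⟨y, mem_univ y, by simpa⟩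
  obtain ⟨i, hi⟩ := h x
  exact ⟨u i, mem_range_self i, hi⟩

lemma coveringRadius_eq_zero_of_surjective {u : κ → X} (hu : u.Surjective) :
    coveringRadius u = 0 := by
  rw [coveringRadius, hu.range_eq, hausdorffDist_self_zero]

lemma exists_dist_le_coveringRadius [CompactSpace X] [Finite κ] [Nonempty κ] (u : κ → X)
    (x : X) : ∃ i, dist x (u i) ≤ coveringRadius u := by
  have hu : IsCompact (range u) := (finite_range u).isCompact
  obtain ⟨_, ⟨i, rfl⟩, hi⟩ := exists_dist_le_hausdorffDist (mem_univ x) hu (range_nonempty u)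
    (hausdorffEDist_ne_top_of_nonempty_of_bounded ⟨x, mem_univ x⟩ (range_nonempty u)
      isCompact_univ.isBounded hu.isBounded)
  exact ⟨i, hi⟩

lemma isBounded_distMatrices [Fintype κ] [Nonempty κ] [CompactSpace X] :
    Bornology.IsBounded (distMatrices κ X) := by
  have hX : Bornology.IsBounded (univ : Set X) := isCompact_univ.isBounded
  refine (isBounded_closedBall (x := 0) (r := diam (univ : Set X))).subset ?_
  rintro _ ⟨u, rfl⟩
  refine mem_closedBall.2 ((dist_pi_le_iff diam_nonneg).2 ?_)
  rintro (⟨i, j⟩ | _)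
  · simpa [distMatrix] using dist_le_diam_of_mem hX (mem_univ (u i)) (mem_univ (u j))
  · simpa [distMatrix, abs_of_nonneg (coveringRadius_nonneg u)] using coveringRadius_le diam_nonneg
      fun x => ⟨Classical.arbitrary κ, dist_le_diam_of_mem hX (mem_univ x) (mem_univ _)⟩

variable {Z P Q : Type*} [PseudoMetricSpace Z] [PseudoMetricSpace P] [PseudoMetricSpace Q]
  {jP : P → Z} {jQ : Q → Z} {ε : ℝ}

lemma coveringRadius_le_add_of_isometry [CompactSpace Q] [Finite κ] [Nonempty κ]
    (hjP : Isometry jP) (hjQ : Isometry jQ) {w : κ → P} {v : κ → Q}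
    (hwv : ∀ i, dist (jP (w i)) (jQ (v i)) ≤ ε) (hP : ∀ p, ∃ q, dist (jP p) (jQ q) ≤ ε) :
    coveringRadius w ≤ coveringRadius v + 2 * ε := by
  have hε : 0 ≤ ε := dist_nonneg.trans (hwv (Classical.arbitrary κ))
  refine coveringRadius_le (by linarith [coveringRadius_nonneg v]) fun p => ?_
  obtain ⟨q, hq⟩ := hP p
  obtain ⟨i, hi⟩ := exists_dist_le_coveringRadius v q
  refine ⟨i, ?_⟩
  calc dist p (w i) = dist (jP p) (jP (w i)) := (hjP.dist_eq _ _).symm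
    _ ≤ dist (jP p) (jQ q) + dist (jQ q) (jQ (v i)) + dist (jQ (v i)) (jP (w i)) :=
      dist_triangle4 _ _ _ _
    _ ≤ ε + coveringRadius v + ε := by
      rw [hjQ.dist_eq, dist_comm (jQ (v i))]
      exact add_le_add_three hq hi (hwv i)
    _ = coveringRadius v + 2 * ε := by ring

lemma dist_distMatrix_le_of_isometry [Fintype κ] [Nonempty κ] [CompactSpace P] [CompactSpace Q]
    (hjP : Isometry jP) (hjQ : Isometry jQ) {w : κ → P} {v : κ → Q}
    (hwv : ∀ i, dist (jP (w i)) (jQ (v i)) ≤ ε) (hP : ∀ p, ∃ q, dist (jP p) (jQ q) ≤ ε)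
    (hQ : ∀ q, ∃ p, dist (jQ q) (jP p) ≤ ε) :
    dist (distMatrix w) (distMatrix v) ≤ 2 * ε := by
  have hε : 0 ≤ ε := dist_nonneg.trans (hwv (Classical.arbitrary κ))
  refine (dist_pi_le_iff (by positivity)).2 ?_
  rintro (⟨i, j⟩ | _)
  · calc dist (dist (w i) (w j)) (dist (v i) (v j))
        = dist (dist (jP (w i)) (jP (w j))) (dist (jQ (v i)) (jQ (v j))) := by
          rw [hjP.dist_eq, hjQ.dist_eq]
      _ ≤ ε + ε := (dist_dist_dist_le _ _ _ _).trans (add_le_add (hwv i) (hwv j))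
      _ = 2 * ε := by ring
  · have hvw : ∀ i, dist (jQ (v i)) (jP (w i)) ≤ ε := fun i => dist_comm (jQ _) _ ▸ hwv i
    have := coveringRadius_le_add_of_isometry hjP hjQ hwv hP
    have := coveringRadius_le_add_of_isometry hjQ hjP hvw hQ
    rw [distMatrix, distMatrix, Sum.elim_inr, Sum.elim_inr, Real.dist_eq, abs_sub_le_iff]
    constructor <;> linarith

theorem hausdorffDist_distMatrices_le_of_isometry [Fintype κ] [Nonempty κ] [CompactSpace P]
    [Nonempty P] [CompactSpace Q] [Nonempty Q] (hjP : Isometry jP) (hjQ : Isometry jQ) :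
    hausdorffDist (distMatrices κ P) (distMatrices κ Q) ≤
      2 * hausdorffDist (range jP) (range jQ) := by
  have hcP : IsCompact (range jP) := isCompact_range hjP.continuous
  have hcQ : IsCompact (range jQ) := isCompact_range hjQ.continuous
  have hfin : hausdorffEDist (range jP) (range jQ) ≠ ⊤ :=
    hausdorffEDist_ne_top_of_nonempty_of_bounded (range_nonempty _) (range_nonempty _)
      hcP.isBounded hcQ.isBounded
  have hP : ∀ p, ∃ q, dist (jP p) (jQ q) ≤ hausdorffDist (range jP) (range jQ) := fun p => by
    obtain ⟨_, ⟨q, rfl⟩, hq⟩ :=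
      exists_dist_le_hausdorffDist (mem_range_self p) hcQ (range_nonempty _) hfin
    exact ⟨q, hq⟩
  have hQ : ∀ q, ∃ p, dist (jQ q) (jP p) ≤ hausdorffDist (range jP) (range jQ) := fun q => by
    rw [hausdorffDist_comm]
    obtain ⟨_, ⟨p, rfl⟩, hp⟩ := exists_dist_le_hausdorffDist (mem_range_self q) hcP
      (range_nonempty _) (by rwa [hausdorffEDist_comm])
    exact ⟨p, hp⟩
  choose Φ hΦ using hP
  choose Ψ hΨ using hQ
  refine hausdorffDist_le_of_mem_dist (mul_nonneg zero_le_two hausdorffDist_nonneg) ?_ ?_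
  · rintro _ ⟨w, rfl⟩
    exact ⟨_, mem_range_self (Φ ∘ w), dist_distMatrix_le_of_isometry hjP hjQ (fun i => hΦ (w i))
      (fun p => ⟨Φ p, hΦ p⟩) fun q => ⟨Ψ q, hΨ q⟩⟩
  · rintro _ ⟨v, rfl⟩
    exact ⟨_, mem_range_self (Ψ ∘ v), dist_distMatrix_le_of_isometry hjQ hjP (fun i => hΨ (v i))
      (fun q => ⟨Ψ q, hΨ q⟩) fun p => ⟨Φ p, hΦ p⟩⟩

end DistMatrix

section GromovHausdorff

open GromovHausdorff

variable {κ : Type*} [Fintype κ]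

theorem hausdorffDist_distMatrices_le_ghDist [Nonempty κ] (X Y : Type*) [MetricSpace X]
    [CompactSpace X] [Nonempty X] [MetricSpace Y] [CompactSpace Y] [Nonempty Y] :
    hausdorffDist (distMatrices κ X) (distMatrices κ Y) ≤ 2 * ghDist X Y := by
  rw [← hausdorffDist_optimal]
  exact hausdorffDist_distMatrices_le_of_isometry (isometry_optimalGHInjl X Y)
    (isometry_optimalGHInjr X Y)

theorem ghDist_le_of_dist_distMatrix_le {X Y : Type*} [MetricSpace X] [CompactSpace X]
    [Nonempty X] [MetricSpace Y] [CompactSpace Y] [Nonempty Y] {u : κ → X} (hu : u.Surjective)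
    {v : κ → Y} {s : ℝ} (h : dist (distMatrix u) (distMatrix v) ≤ s) :
    ghDist X Y ≤ 5 / 2 * s := by
  set σ := Function.surjInv hu
  have hσ : ∀ x, u (σ x) = x := Function.surjInv_eq hu
  have : Nonempty κ := ⟨σ (Classical.arbitrary X)⟩
  have hentry : ∀ i j, |dist (u i) (u j) - dist (v i) (v j)| ≤ s := fun i j =>
    (dist_le_pi_dist _ _ (Sum.inl (i, j))).trans h
  have hcov : coveringRadius v ≤ s := by
    have := (dist_le_pi_dist _ _ (Sum.inr ())).trans h
    rwa [distMatrix, distMatrix, Sum.elim_inr, Sum.elim_inr,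
      coveringRadius_eq_zero_of_surjective hu, dist_zero_left, Real.norm_eq_abs,
      abs_of_nonneg (coveringRadius_nonneg v)] at this
  have hdense : ∀ y, ∃ x : (univ : Set X), dist y (v (σ x)) ≤ 2 * s := fun y => by
    obtain ⟨i, hi⟩ := exists_dist_le_coveringRadius v y
    have hvi := hentry (σ (u i)) i
    rw [hσ, dist_self, zero_sub, abs_neg, abs_of_nonneg dist_nonneg] at hvi
    refine ⟨⟨u i, mem_univ _⟩, ?_⟩
    calc dist y (v (σ (u i))) ≤ dist y (v i) + dist (v i) (v (σ (u i))) := dist_triangle _ _ _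
      _ ≤ s + s := add_le_add (hi.trans hcov) (dist_comm (v i) _ ▸ hvi)
      _ = 2 * s := by ring
  -- `ghDist_le_of_approx_subsets` with `ε₁ = 0`, `ε₂ = s`, `ε₃ = 2 * s` gives `5 / 2 * s`.
  have := ghDist_le_of_approx_subsets (fun x : (univ : Set X) => v (σ x)) (ε₁ := 0)
    (fun x => ⟨x, mem_univ x, (dist_self x).le⟩) hdense fun x y => by
      simpa only [hσ, Subtype.dist_eq] using hentry (σ x) (σ y)
  linarith

theorem ghDist_le_hausdorffDist_distMatrices (X Y : Type*) [MetricSpace X] [Finite X]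
    [Nonempty X] [MetricSpace Y] [CompactSpace Y] [Nonempty Y] (hX : Nat.card X ≤ Fintype.card κ) :
    ghDist X Y ≤ 5 / 2 * hausdorffDist (distMatrices κ X) (distMatrices κ Y) := by
  obtain ⟨u, hu⟩ := exists_surjective_of_natCard_le (hX.trans_eq Nat.card_eq_fintype_card.symm)
  have : Nonempty κ := ⟨Function.surjInv hu (Classical.arbitrary X)⟩
  have hfin : hausdorffEDist (distMatrices κ X) (distMatrices κ Y) ≠ ⊤ :=
    hausdorffEDist_ne_top_of_nonempty_of_bounded (range_nonempty _) (range_nonempty _)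
      isBounded_distMatrices isBounded_distMatrices
  refine le_of_forall_pos_le_add fun δ hδ => ?_
  obtain ⟨_, ⟨v, rfl⟩, hv⟩ := exists_dist_lt_of_hausdorffDist_lt
    (s := distMatrices κ X) (mem_range_self u)
    (lt_add_of_pos_right _ (by positivity : 0 < 2 / 5 * δ)) hfin
  linarith [ghDist_le_of_dist_distMatrix_le hu hv.le]

theorem exists_bilipschitz_map_finset (n : ℕ) :
    ∃ K : {p : GHSpace // Finite p.Rep ∧ Nat.card p.Rep ≤ n} →
      {A : Finset ((Fin n × Fin n) ⊕ Unit → ℝ) // A.Nonempty ∧ A.card ≤ n ^ n},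
      ∀ p q, 2 / 5 * dist p q ≤ hausdorffDist ((K p).1 : Set ((Fin n × Fin n) ⊕ Unit → ℝ)) (K q).1 ∧
        hausdorffDist ((K p).1 : Set ((Fin n × Fin n) ⊕ Unit → ℝ)) (K q).1 ≤ 2 * dist p q := by
  have hfin (p : {p : GHSpace // Finite p.Rep ∧ Nat.card p.Rep ≤ n}) :
      (distMatrices (Fin n) p.1.Rep).Finite :=
    have := p.2.1
    finite_range _
  have hcard (p : {p : GHSpace // Finite p.Rep ∧ Nat.card p.Rep ≤ n}) :
      (hfin p).toFinset.card ≤ n ^ n := by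
    have := p.2.1
    calc (hfin p).toFinset.card = Nat.card (distMatrices (Fin n) p.1.Rep) :=
          (Nat.card_eq_card_finite_toFinset _).symm
      _ ≤ Nat.card (Fin n → p.1.Rep) := Finite.card_range_le _
      _ ≤ n ^ n := by simpa [Nat.card_fun] using Nat.pow_le_pow_left p.2.2 n
  refine ⟨fun p => ⟨(hfin p).toFinset, (hfin p).toFinset_nonempty.2 (range_nonempty _), hcard p⟩,
    fun p q => ?_⟩
  have := p.2.1
  have : Nonempty (Fin n) := ⟨⟨0, Nat.card_pos.trans_le p.2.2⟩⟩
  simp only [Set.Finite.coe_toFinset, Subtype.dist_eq, dist_ghDist]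
  have := ghDist_le_hausdorffDist_distMatrices (κ := Fin n) p.1.Rep q.1.Rep (by simpa using p.2.2)
  exact ⟨by linarith, hausdorffDist_distMatrices_le_ghDist _ _⟩

end GromovHausdorff

section Multiscale

def latticePoint {ι : Type*} (j : ℕ) (z : ι → ℤ) : ι → ℝ :=
  fun i => 2 ^ j * z i

variable {ι : Type*} [Fintype ι]

noncomputable def feature (A : Set (ι → ℝ)) (c : ℕ × (ι → ℤ)) : ℝ :=
  max 0 (1 - infDist (latticePoint c.1 c.2) A / 2 ^ c.1)

lemma feature_nonneg (A : Set (ι → ℝ)) (c : ℕ × (ι → ℤ)) : 0 ≤ feature A c :=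
  le_max_left _ _

lemma feature_le_one (A : Set (ι → ℝ)) (c : ℕ × (ι → ℤ)) : feature A c ≤ 1 :=
  max_le zero_le_one (sub_le_self _ (div_nonneg infDist_nonneg (by positivity)))

lemma feature_eq_zero {A : Set (ι → ℝ)} {j : ℕ} {z : ι → ℤ}
    (h : 2 ^ j ≤ infDist (latticePoint j z) A) : feature A (j, z) = 0 :=
  max_eq_left (sub_nonpos.2 ((one_le_div (by positivity)).2 h))

lemma abs_feature_sub_feature_le {A B : Set (ι → ℝ)} (hAB : hausdorffEDist A B ≠ ⊤)
    (c : ℕ × (ι → ℤ)) : |feature A c - feature B c| ≤ hausdorffDist A B / 2 ^ c.1 := by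
  have h2 : (0 : ℝ) < 2 ^ c.1 := by positivity
  set a := infDist (latticePoint c.1 c.2) A
  set b := infDist (latticePoint c.1 c.2) B
  have hab : |a - b| ≤ hausdorffDist A B := by
    have hA := infDist_le_infDist_add_hausdorffDist (x := latticePoint c.1 c.2) hAB
    have hB := infDist_le_infDist_add_hausdorffDist (x := latticePoint c.1 c.2)
      (by rwa [hausdorffEDist_comm])
    rw [hausdorffDist_comm] at hB
    rw [abs_sub_le_iff]
    constructor <;> linarith
  calc |feature A c - feature B c| ≤ |(1 - a / 2 ^ c.1) - (1 - b / 2 ^ c.1)| := by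
        simpa only [feature, max_comm (0 : ℝ)] using abs_max_sub_max_le_abs _ _ (0 : ℝ)
    _ = |a - b| / 2 ^ c.1 := by
        rw [show (1 - a / 2 ^ c.1) - (1 - b / 2 ^ c.1) = (b - a) / 2 ^ c.1 by ring, abs_div,
          abs_of_pos h2, abs_sub_comm]
    _ ≤ hausdorffDist A B / 2 ^ c.1 := by gcongr

noncomputable def cell (j : ℕ) (a : ι → ℝ) : Finset (ι → ℤ) := by
  classical
  exact Fintype.piFinset fun i => Finset.Icc ⌊a i / 2 ^ j⌋ (⌊a i / 2 ^ j⌋ + 1)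

lemma card_cell (j : ℕ) (a : ι → ℝ) : (cell j a).card = 2 ^ Fintype.card ι := by
  classical
  simp [cell, Fintype.card_piFinset, Int.card_Icc, add_assoc, one_add_one_eq_two]

lemma mem_cell_of_dist_lt {j : ℕ} {z : ι → ℤ} {a : ι → ℝ}
    (h : dist (latticePoint j z) a < 2 ^ j) : z ∈ cell j a := by
  classical
  have h2 : (0 : ℝ) < 2 ^ j := by positivity
  simp only [cell, Fintype.mem_piFinset, Finset.mem_Icc]
  intro i
  have hi := abs_sub_lt_iff.1 (((dist_le_pi_dist _ _ i).trans_lt h).trans_eq' (Real.dist_eq _ _))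
  simp only [latticePoint] at hi
  constructor
  · rw [Int.floor_le_iff, div_lt_iff₀ h2]
    linarith
  · rw [← sub_le_iff_le_add, Int.le_floor, le_div_iff₀ h2]
    push_cast
    linarith

lemma exists_mem_cell_of_feature_ne_zero {A : Set (ι → ℝ)} (hA : A.Nonempty) {j : ℕ}
    {z : ι → ℤ} (h : feature A (j, z) ≠ 0) : ∃ a ∈ A, z ∈ cell j a := by
  obtain ⟨a, ha, hza⟩ := (infDist_lt_iff hA).1 (not_le.1 fun hle => h (feature_eq_zero hle))
  exact ⟨a, ha, mem_cell_of_dist_lt hza⟩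

lemma dist_latticePoint_round_le (j : ℕ) (a : ι → ℝ) :
    dist (latticePoint j fun i => round (a i / 2 ^ j)) a ≤ 2 ^ j / 2 := by
  have h2 : (0 : ℝ) < 2 ^ j := by positivity
  refine (dist_pi_le_iff (by positivity)).2 fun i => ?_
  rw [Real.dist_eq, latticePoint,
    show 2 ^ j * (round (a i / 2 ^ j) : ℝ) - a i = 2 ^ j * (round (a i / 2 ^ j) - a i / 2 ^ j) by
      field_simp,
    abs_mul, abs_of_pos h2, abs_sub_comm]
  linarith [mul_le_mul_of_nonneg_left (abs_sub_round (a i / 2 ^ j)) h2.le]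

lemma one_fourth_le_sq_feature_sub {A B : Set (ι → ℝ)} {a : ι → ℝ} (ha : a ∈ A) {j : ℕ}
    (hB : 2 ^ (j + 1) ≤ infDist a B) :
    1 / 4 ≤ (feature A (j, fun i => round (a i / 2 ^ j)) -
      feature B (j, fun i => round (a i / 2 ^ j))) ^ 2 := by
  have h2 : (0 : ℝ) < 2 ^ j := by positivity
  set p := latticePoint j fun i => round (a i / 2 ^ j)
  have hp : dist p a ≤ 2 ^ j / 2 := dist_latticePoint_round_le j a
  have hfA : 1 / 2 ≤ feature A (j, fun i => round (a i / 2 ^ j)) := by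
    have : infDist p A / 2 ^ j ≤ 1 / 2 := by
      rw [div_le_iff₀ h2]
      linarith [infDist_le_dist_of_mem (x := p) ha]
    exact le_max_of_le_right (by linarith)
  have hfB : feature B (j, fun i => round (a i / 2 ^ j)) = 0 := by
    refine feature_eq_zero (show 2 ^ j ≤ infDist p B from ?_)
    have := infDist_le_infDist_add_dist (s := B) (x := a) (y := p)
    rw [pow_succ] at hB
    rw [dist_comm] at hp
    linarith
  rw [hfB, sub_zero]
  nlinarith

end Multiscale

section FeatureSums

variable {ι : Type*} [Fintype ι] {A B : Finset (ι → ℝ)}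

lemma sq_feature_sub_le (hA : A.Nonempty) (hB : B.Nonempty) (c : ℕ × (ι → ℤ)) :
    (feature ↑A c - feature ↑B c) ^ 2 ≤ hausdorffDist (A : Set (ι → ℝ)) B / 2 ^ c.1 := by
  have h1 : |feature ↑A c - feature ↑B c| ≤ 1 := abs_sub_le_iff.2
    ⟨by linarith [feature_le_one ↑A c, feature_nonneg ↑B c],
      by linarith [feature_le_one ↑B c, feature_nonneg ↑A c]⟩
  have h2 := abs_feature_sub_feature_le (hausdorffEDist_coe_finset_ne_top hA hB) c
  rw [← sq_abs]
  nlinarith [abs_nonneg (feature ↑A c - feature ↑B c)]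

lemma sq_feature_sub_eq_zero_of_notMem [DecidableEq (ι → ℝ)] (hA : A.Nonempty)
    (hB : B.Nonempty) {j : ℕ} {z : ι → ℤ} (hz : z ∉ (A ∪ B).biUnion (cell j)) :
    (feature ↑A (j, z) - feature ↑B (j, z)) ^ 2 = 0 := by
  have hzero {S : Finset (ι → ℝ)} (hS : S.Nonempty) (hSAB : S ⊆ A ∪ B) :
      feature ↑S (j, z) = 0 := by
    by_contra hne
    obtain ⟨a, ha, hza⟩ := exists_mem_cell_of_feature_ne_zero hS.to_set hne
    exact hz (Finset.mem_biUnion.2 ⟨a, hSAB ha, hza⟩)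
  rw [hzero hA Finset.subset_union_left, hzero hB Finset.subset_union_right]
  norm_num

lemma summable_sq_feature_sub_slice (hA : A.Nonempty) (hB : B.Nonempty) (j : ℕ) :
    Summable fun z : ι → ℤ => (feature ↑A (j, z) - feature ↑B (j, z)) ^ 2 := by
  classical
  exact summable_of_ne_finset_zero fun _ hz => sq_feature_sub_eq_zero_of_notMem hA hB hz

-- Only the `2 ^ |ι|` lattice points of the cells around the points of `A ∪ B` contribute.
lemma tsum_sq_feature_sub_slice_le (hA : A.Nonempty) (hB : B.Nonempty) (j : ℕ) :
    ∑' z : ι → ℤ, (feature ↑A (j, z) - feature ↑B (j, z)) ^ 2 ≤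
      (A.card + B.card) * 2 ^ Fintype.card ι * hausdorffDist (A : Set (ι → ℝ)) B *
        (1 / 2) ^ j := by
  classical
  have hcard : ((A ∪ B).biUnion (cell j)).card ≤ (A.card + B.card) * 2 ^ Fintype.card ι :=
    (Finset.card_biUnion_le_card_mul _ _ _ fun a _ => (card_cell j a).le).trans
      (Nat.mul_le_mul_right _ (Finset.card_union_le A B))
  rw [tsum_eq_sum fun _ hz => sq_feature_sub_eq_zero_of_notMem hA hB hz]
  calc _ ≤ ((A ∪ B).biUnion (cell j)).card • (hausdorffDist (A : Set (ι → ℝ)) B / 2 ^ j) :=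
        Finset.sum_le_card_nsmul _ _ _ fun z _ => sq_feature_sub_le hA hB (j, z)
    _ ≤ ((A.card + B.card) * 2 ^ Fintype.card ι : ℕ) *
          (hausdorffDist (A : Set (ι → ℝ)) B / 2 ^ j) := by
        rw [nsmul_eq_mul]
        gcongr
        exact div_nonneg hausdorffDist_nonneg (by positivity)
    _ = _ := by rw [one_div_pow]; push_cast; ring

lemma summable_sq_feature_sub (hA : A.Nonempty) (hB : B.Nonempty) :
    Summable fun c : ℕ × (ι → ℤ) => (feature ↑A c - feature ↑B c) ^ 2 :=
  (summable_prod_of_nonneg fun _ => sq_nonneg _).2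
    ⟨summable_sq_feature_sub_slice hA hB,
      (summable_geometric_two.mul_left _).of_nonneg_of_le
        (fun _ => tsum_nonneg fun _ => sq_nonneg _) (tsum_sq_feature_sub_slice_le hA hB)⟩

lemma tsum_sq_feature_sub_le (hA : A.Nonempty) (hB : B.Nonempty) :
    ∑' c : ℕ × (ι → ℤ), (feature ↑A c - feature ↑B c) ^ 2 ≤
      2 * (A.card + B.card) * 2 ^ Fintype.card ι * hausdorffDist (A : Set (ι → ℝ)) B := by
  have hs := summable_sq_feature_sub hA hB
  rw [hs.tsum_prod' (summable_sq_feature_sub_slice hA hB)]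
  calc _ ≤ ∑' j : ℕ, (A.card + B.card) * 2 ^ Fintype.card ι *
        hausdorffDist (A : Set (ι → ℝ)) B * (1 / 2 : ℝ) ^ j :=
        hs.prod.tsum_le_tsum (tsum_sq_feature_sub_slice_le hA hB)
          (summable_geometric_two.mul_left _)
    _ = _ := by rw [tsum_mul_left, tsum_geometric_two]; ring

lemma one_fourth_le_tsum_sq_feature_sub_slice (hA : A.Nonempty) (hB : B.Nonempty) {j : ℕ}
    (hj : 2 ^ (j + 1) < hausdorffDist (A : Set (ι → ℝ)) B) :
    1 / 4 ≤ ∑' z : ι → ℤ, (feature ↑A (j, z) - feature ↑B (j, z)) ^ 2 := by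
  have hle {z} := (summable_sq_feature_sub_slice hA hB j).le_tsum z fun _ _ => sq_nonneg _
  by_cases hfar : ∃ a ∈ (A : Set (ι → ℝ)), 2 ^ (j + 1) ≤ infDist a B
  · obtain ⟨a, ha, haB⟩ := hfar
    exact (one_fourth_le_sq_feature_sub ha haB).trans hle
  · obtain ⟨b, hb, hbA⟩ : ∃ b ∈ (B : Set (ι → ℝ)), 2 ^ (j + 1) ≤ infDist b A := by
      by_contra! hnear
      push Not at hfar
      exact hj.not_ge (hausdorffDist_le_of_infDist (by positivity) (fun a ha => (hfar a ha).le)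
        fun b hb => (hnear b hb).le)
    exact (one_fourth_le_sq_feature_sub hb hbA).trans ((sub_sq_comm _ _).trans_le hle)

lemma natCast_le_four_mul_tsum_sq_feature_sub (hA : A.Nonempty) (hB : B.Nonempty) {N : ℕ}
    (hN : 2 ^ N < hausdorffDist (A : Set (ι → ℝ)) B) :
    (N : ℝ) ≤ 4 * ∑' c : ℕ × (ι → ℤ), (feature ↑A c - feature ↑B c) ^ 2 := by
  have hs := summable_sq_feature_sub hA hB
  rw [hs.tsum_prod' (summable_sq_feature_sub_slice hA hB)]
  calc (N : ℝ) = 4 * ∑ _j ∈ Finset.range N, (1 / 4 : ℝ) := by simp; ring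
    _ ≤ 4 * ∑ j ∈ Finset.range N, ∑' z : ι → ℤ, (feature ↑A (j, z) - feature ↑B (j, z)) ^ 2 := by
      gcongr with j hj
      refine one_fourth_le_tsum_sq_feature_sub_slice hA hB (lt_of_le_of_lt ?_ hN)
      exact pow_le_pow_right₀ one_le_two (Finset.mem_range.1 hj)
    _ ≤ _ := by
      gcongr
      exact hs.prod.sum_le_tsum _ fun _ _ => tsum_nonneg fun _ => sq_nonneg _

lemma logb_le_four_mul_tsum_sq_feature_sub_add_two (hA : A.Nonempty) (hB : B.Nonempty) {r : ℝ}
    (hr : 0 ≤ r) (hrd : r ≤ hausdorffDist (A : Set (ι → ℝ)) B) :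
    Real.logb 2 r ≤ 4 * ∑' c : ℕ × (ι → ℤ), (feature ↑A c - feature ↑B c) ^ 2 + 2 := by
  have h0 : 0 ≤ ∑' c : ℕ × (ι → ℤ), (feature ↑A c - feature ↑B c) ^ 2 :=
    tsum_nonneg fun _ => sq_nonneg _
  by_cases hlog : Real.logb 2 r < 2
  · linarith
  push Not at hlog
  have hr0 : 0 < r := hr.lt_of_ne fun h => by norm_num [← h] at hlog
  obtain ⟨N, hN⟩ := Nat.exists_eq_add_one_of_ne_zero
    (Nat.floor_pos.2 (by linarith : (1 : ℝ) ≤ Real.logb 2 r)).ne'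
  have hpow : (2 : ℝ) ^ (N + 1) ≤ r := by
    rw [← hN, ← Real.rpow_natCast, ← Real.le_logb_iff_rpow_le one_lt_two hr0]
    exact Nat.floor_le (by linarith)
  have hNle := natCast_le_four_mul_tsum_sq_feature_sub hA hB
    ((pow_lt_pow_right₀ one_lt_two N.lt_succ_self).trans_le (hpow.trans hrd))
  have hfloor := Nat.lt_floor_add_one (Real.logb 2 r)
  rw [hN] at hfloor
  push_cast at hfloor
  linarith

end FeatureSums

theorem exists_lp_sq_dist_eq_tsum {α κ : Type*} [Countable κ] [Infinite κ] (F : α → κ → ℝ)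
    (hF : ∀ a b, Summable fun c => (F a c - F b c) ^ 2) :
    ∃ ψ : α → lp (fun _ : ℕ => ℝ) 2, ∀ a b,
      dist (ψ a) (ψ b) ^ 2 = ∑' c, (F a c - F b c) ^ 2 := by
  rcases isEmpty_or_nonempty α with hα | ⟨⟨a₀⟩⟩
  · exact ⟨isEmptyElim, isEmptyElim⟩
  obtain ⟨_⟩ := nonempty_denumerable κ
  let e : ℕ ≃ κ := (Denumerable.eqv κ).symm
  -- Only the differences `F a - F b` are square-summable, so recentre at `a₀`.
  have hmem (a : α) : Memℓp (fun k => F a (e k) - F a₀ (e k)) 2 :=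
    (memℓp_gen_iff (by norm_num)).2 (by simpa [Function.comp_def] using e.summable_iff.2 (hF a a₀))
  refine ⟨fun a => ⟨_, hmem a⟩, fun a b => ?_⟩
  have := lp.norm_rpow_eq_tsum (p := 2) (by norm_num) (⟨_, hmem a⟩ - ⟨_, hmem b⟩)
  simp only [ENNReal.toReal_ofNat, Real.rpow_two, lp.coeFn_sub, Pi.sub_apply,
    Real.norm_eq_abs, sq_abs, sub_sub_sub_cancel_right] at this
  rw [dist_eq_norm, this]
  exact e.tsum_eq fun c => (F a c - F b c) ^ 2

theorem exists_lp_embedding_finset (ι : Type*) [Fintype ι] (k : ℕ) :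
    ∃ φ : {A : Finset (ι → ℝ) // A.Nonempty ∧ A.card ≤ k} → lp (fun _ : ℕ => ℝ) 2, ∀ A B,
      dist (φ A) (φ B) ^ 2 ≤ 4 * k * 2 ^ Fintype.card ι * hausdorffDist (A.1 : Set (ι → ℝ)) B.1 ∧
      ∀ r, 0 ≤ r → r ≤ hausdorffDist (A.1 : Set (ι → ℝ)) B.1 →
        Real.logb 2 r ≤ 4 * dist (φ A) (φ B) ^ 2 + 2 := by
  obtain ⟨φ, hφ⟩ := exists_lp_sq_dist_eq_tsum
    (fun A : {A : Finset (ι → ℝ) // A.Nonempty ∧ A.card ≤ k} => feature (A.1 : Set (ι → ℝ)))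
    fun A B => summable_sq_feature_sub A.2.1 B.2.1
  refine ⟨φ, fun A B => ⟨?_, fun r hr hrd => ?_⟩⟩
  · rw [hφ]
    calc _ ≤ 2 * (A.1.card + B.1.card) * 2 ^ Fintype.card ι *
          hausdorffDist (A.1 : Set (ι → ℝ)) B.1 := tsum_sq_feature_sub_le A.2.1 B.2.1
      _ ≤ 2 * (k + k) * 2 ^ Fintype.card ι * hausdorffDist (A.1 : Set (ι → ℝ)) B.1 := by
          gcongr
          · exact hausdorffDist_nonneg
          · exact_mod_cast A.2.2
          · exact_mod_cast B.2.2
      _ = _ := by ring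
  · rw [hφ]
    exact logb_le_four_mul_tsum_sq_feature_sub_add_two A.2.1 B.2.1 hr hrd

lemma CoarseEmbedding.of_sq_dist_bounds {X Y : Type*} [PseudoMetricSpace X]
    [PseudoMetricSpace Y] {ψ : X → Y} {f g : ℝ → ℝ} (hf : Tendsto f atTop atTop)
    (hlow : ∀ x y, f (dist x y) ≤ dist (ψ x) (ψ y) ^ 2)
    (hup : ∀ x y, dist (ψ x) (ψ y) ^ 2 ≤ g (dist x y)) : CoarseEmbedding ψ :=
  ⟨fun t => √(f t), fun t => √(g t), Real.tendsto_sqrt_atTop.comp hf, fun x y =>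
    ⟨(Real.sqrt_le_sqrt (hlow x y)).trans_eq (Real.sqrt_sq dist_nonneg),
      (Real.sqrt_sq dist_nonneg).symm.trans_le (Real.sqrt_le_sqrt (hup x y))⟩⟩

theorem GH_le_n_coarsely_embeds_l2 (n : ℕ) :
    ∃ ψ : {p : GromovHausdorff.GHSpace // Finite p.Rep ∧ Nat.card p.Rep ≤ n} →
      lp (fun _ : ℕ => ℝ) 2, CoarseEmbedding ψ := by
  obtain ⟨K, hK⟩ := exists_bilipschitz_map_finset n
  obtain ⟨φ, hφ⟩ := exists_lp_embedding_finset ((Fin n × Fin n) ⊕ Unit) (n ^ n)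
  have hlog : Tendsto (fun t : ℝ => (Real.logb 2 (2 / 5 * t) - 2) / 4) atTop atTop := by
    have : Tendsto (fun t : ℝ => Real.logb 2 (2 / 5 * t)) atTop atTop :=
      (Real.tendsto_logb_atTop one_lt_two).comp
        (tendsto_id.const_mul_atTop (by norm_num : (0 : ℝ) < 2 / 5))
    simpa only [sub_eq_add_neg] using
      (tendsto_atTop_add_const_right _ (-2) this).atTop_div_const (by norm_num : (0 : ℝ) < 4)
  refine ⟨φ ∘ K, .of_sq_dist_bounds hlog (fun p q => ?_)
    (g := fun t => 4 * (n ^ n : ℕ) * 2 ^ Fintype.card ((Fin n × Fin n) ⊕ Unit) * (2 * t))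
    fun p q => ?_⟩
  · show _ ≤ dist (φ (K p)) (φ (K q)) ^ 2
    linarith [(hφ (K p) (K q)).2 _ (by positivity) (hK p q).1]
  · exact (hφ (K p) (K q)).1.trans (mul_le_mul_of_nonneg_left (hK p q).2 (by positivity))
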